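/- arXiv:2008.04708 — 2 statements merged into one kernel-verified Lean document; each statement's English description precedes it below -/
import Mathlib

section
/- Consistency of group-specific means (Lemma 1): Under Assumption 1 and along the asymptotic sequence, there exists a (possibly random) permutation π of {1,…,G} such that for every ε > 0, P( max_{g ∈ {1,…,G}} |μ̂_{π(g)} − μ⁰_g| > ε ) → 0 as n → ∞. -/
open MeasureTheory ProbabilityTheory Filter Finset

/-!
Comparing the kmeans objective at the estimator with its value at the truth `(g⁰, μ⁰)` gives
the basic inequality
  `N⁻¹ ∑ᵢ (μ⁰_{g⁰ᵢ} - μ̂_{ĝᵢ})² ≤ 2C · (NT)⁻¹ ∑ᵢ |σᵢ ∑ₜ vᵢₜ|`,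
where `C` bounds the differences of points of the parameter set. Since `E |∑ₜ vᵢₜ| ≤ √T`,
Cauchy–Schwarz bounds the expectation of the right side by `2C √(N⁻¹ ∑ᵢ σᵢ² / T) → 0`, so by
Markov it tends to zero in probability. Whenever the left side is below `q_min ε²`, each true
group, having at least `q_min N` units, has an estimated centre within `ε` of its mean; by
separation these centres are distinct and so form a relabelling. The relabelling that minimises
the sup-distance does at least as well, and it does not depend on `ε`.
-/

noncomputable def meanAbsRowMean {κ ι : Type*} (s : Finset κ) (u : Finset ι) (e : κ → ι → ℝ) :
    ℝ :=
  ((#s : ℝ) * #u)⁻¹ * ∑ i ∈ s, |∑ t ∈ u, e i t|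

lemma meanAbsRowMean_nonneg {κ ι : Type*} (s : Finset κ) (u : Finset ι) (e : κ → ι → ℝ) :
    0 ≤ meanAbsRowMean s u e := by
  unfold meanAbsRowMean
  positivity

section Moments

variable {Ω : Type*} [MeasurableSpace Ω] {μ : Measure Ω}

lemma integrable_meanAbsRowMean {κ ι : Type*} (s : Finset κ) (u : Finset ι)
    {e : κ → ι → Ω → ℝ} (he : ∀ i t, Integrable (e i t) μ) :
    Integrable (fun ω => meanAbsRowMean s u fun i t => e i t ω) μ :=
  (integrable_finsetSum s fun i _ => (integrable_finsetSum u fun t _ => he i t).abs).const_mul _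

variable [IsProbabilityMeasure μ]

lemma sq_integral_abs_le_integral_sq {f : Ω → ℝ} (hf : MemLp f 2 μ) :
    (∫ ω, |f ω| ∂μ) ^ 2 ≤ ∫ ω, f ω ^ 2 ∂μ := by
  have h := variance_eq_sub hf.norm
  have h0 := variance_nonneg (fun ω => ‖f ω‖) μ
  simp only [Pi.pow_apply, Real.norm_eq_abs, sq_abs] at h h0
  linarith

lemma integral_sq_sum_eq_card {ι : Type*} {v : ι → Ω → ℝ} (hv : ∀ t, MemLp (v t) 2 μ)
    (hindep : iIndepFun v μ) (hmean : ∀ t, ∫ ω, v t ω ∂μ = 0)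
    (hvar : ∀ t, ∫ ω, v t ω ^ 2 ∂μ = 1) (s : Finset ι) :
    ∫ ω, (∑ t ∈ s, v t ω) ^ 2 ∂μ = #s := by
  have hsum := IndepFun.variance_sum (s := s) (fun t _ => hv t)
    fun t _ r _ htr => hindep.indepFun htr
  rw [variance_eq_sub (memLp_finsetSum' s fun t _ => hv t)] at hsum
  simp only [variance_eq_sub (hv _), Pi.pow_apply, Finset.sum_apply, hmean, hvar,
    integral_finsetSum s fun t _ => (hv t).integrable one_le_two] at hsum
  simpa using hsum

lemma integral_abs_sum_le_sqrt_card {ι : Type*} {v : ι → Ω → ℝ} (hv : ∀ t, MemLp (v t) 2 μ)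
    (hindep : iIndepFun v μ) (hmean : ∀ t, ∫ ω, v t ω ∂μ = 0)
    (hvar : ∀ t, ∫ ω, v t ω ^ 2 ∂μ = 1) (s : Finset ι) :
    ∫ ω, |∑ t ∈ s, v t ω| ∂μ ≤ √(#s : ℝ) := by
  refine Real.le_sqrt_of_sq_le ?_
  rw [← integral_sq_sum_eq_card hv hindep hmean hvar s]
  exact sq_integral_abs_le_integral_sq (memLp_finsetSum s fun t _ => hv t)

lemma integral_meanAbsRowMean_le {κ ι : Type*} (s : Finset κ) (u : Finset ι) (σ : κ → ℝ)
    {v : κ → ι → Ω → ℝ} (hv : ∀ i t, MemLp (v i t) 2 μ) (hindep : ∀ i, iIndepFun (v i) μ)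
    (hmean : ∀ i t, ∫ ω, v i t ω ∂μ = 0) (hvar : ∀ i t, ∫ ω, v i t ω ^ 2 ∂μ = 1) :
    ∫ ω, meanAbsRowMean s u (fun i t => σ i * v i t ω) ∂μ
      ≤ √(((#s : ℝ)⁻¹ * ∑ i ∈ s, σ i ^ 2) / #u) := by
  set c : ℝ := ((#s : ℝ) * #u)⁻¹
  have hterm : ∀ i, ∫ ω, |∑ t ∈ u, σ i * v i t ω| ∂μ ≤ |σ i| * √(#u : ℝ) := fun i => by
    simp only [← mul_sum, abs_mul, integral_const_mul]
    exact mul_le_mul_of_nonneg_left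
      (integral_abs_sum_le_sqrt_card (hv i) (hindep i) (hmean i) (hvar i) u) (abs_nonneg _)
  have hcs : (∑ i ∈ s, |σ i|) ^ 2 ≤ #s * ∑ i ∈ s, σ i ^ 2 := by
    simpa only [sq_abs] using sq_sum_le_card_mul_sum_sq (s := s) (f := fun i => |σ i|)
  have hint : ∀ i ∈ s, Integrable (fun ω => |∑ t ∈ u, σ i * v i t ω|) μ := fun i _ =>
    (integrable_finsetSum u fun t _ => ((hv i t).integrable one_le_two).const_mul (σ i)).abs
  calc ∫ ω, meanAbsRowMean s u (fun i t => σ i * v i t ω) ∂μ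
      = c * ∑ i ∈ s, ∫ ω, |∑ t ∈ u, σ i * v i t ω| ∂μ := by
        unfold meanAbsRowMean
        rw [integral_const_mul, integral_finsetSum s hint]
    _ ≤ c * ((∑ i ∈ s, |σ i|) * √(#u : ℝ)) := by
        rw [sum_mul]
        exact mul_le_mul_of_nonneg_left (sum_le_sum fun i _ => hterm i) (by positivity)
    _ ≤ √(((#s : ℝ)⁻¹ * ∑ i ∈ s, σ i ^ 2) / #u) := by
        refine Real.le_sqrt_of_sq_le ?_
        have hc : c ^ 2 * (#s * #u) = c := by
          simp only [c, sq]; field_simp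
        calc (c * ((∑ i ∈ s, |σ i|) * √(#u : ℝ))) ^ 2
            = c ^ 2 * (∑ i ∈ s, |σ i|) ^ 2 * #u := by
              rw [mul_pow, mul_pow, Real.sq_sqrt (Nat.cast_nonneg _), mul_assoc]
          _ ≤ c ^ 2 * (#s * ∑ i ∈ s, σ i ^ 2) * #u := by gcongr
          _ = ((#s : ℝ)⁻¹ * ∑ i ∈ s, σ i ^ 2) / #u := by
              rw [show c ^ 2 * (#s * ∑ i ∈ s, σ i ^ 2) * #u = c ^ 2 * (#s * #u) * ∑ i ∈ s, σ i ^ 2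
                by ring, hc]
              ring

end Moments

lemma tendsto_measure_setOf_le_of_integral_le {Ω : ℕ → Type*} [∀ n, MeasurableSpace (Ω n)]
    {P : ∀ n, Measure (Ω n)} [∀ n, IsFiniteMeasure (P n)] {Z : ∀ n, Ω n → ℝ} {b : ℕ → ℝ}
    (hZ : ∀ n, 0 ≤ Z n) (hint : ∀ n, Integrable (Z n) (P n))
    (hb : ∀ n, ∫ ω, Z n ω ∂P n ≤ b n) (hlim : Tendsto b atTop (nhds 0)) {δ : ℝ} (hδ : 0 < δ) :
    Tendsto (fun n => P n {ω | δ ≤ Z n ω}) atTop (nhds 0) := by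
  have hmarkov : ∀ n, P n {ω | δ ≤ Z n ω} ≤ ENNReal.ofReal (b n / δ) := fun n => by
    rw [← ofReal_measureReal]
    refine ENNReal.ofReal_le_ofReal ((le_div_iff₀' hδ).2 ?_)
    exact (mul_meas_ge_le_integral_of_nonneg (.of_forall (hZ n)) (hint n) δ).trans (hb n)
  have hbδ : Tendsto (fun n => ENNReal.ofReal (b n / δ)) atTop (nhds 0) := by
    simpa using ENNReal.tendsto_ofReal (hlim.div_const δ)
  exact tendsto_of_tendsto_of_tendsto_of_le_of_le tendsto_const_nhds hbδ (fun _ => zero_le)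
    hmarkov

lemma exists_pos_abs_sub_le_of_isBounded {ι : Type*} [Fintype ι] {M : Set (ι → ℝ)}
    (hM : Bornology.IsBounded M) :
    ∃ C > 0, ∀ x ∈ M, ∀ y ∈ M, ∀ g h, |x g - y h| ≤ C := by
  obtain ⟨R, hR, hRM⟩ := hM.exists_pos_norm_le
  refine ⟨2 * R, by positivity, fun x hx y hy g h => ?_⟩
  calc |x g - y h| ≤ ‖x g‖ + ‖y h‖ := abs_sub _ _
    _ ≤ ‖x‖ + ‖y‖ := add_le_add (norm_le_pi_norm x g) (norm_le_pi_norm y h)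
    _ ≤ 2 * R := by linarith [hRM x hx, hRM y hy]

lemma card_mul_sum_sq_sub_le {κ ι : Type*} (s : Finset κ) (u : Finset ι) {m c : κ → ℝ}
    (e : κ → ι → ℝ) {C : ℝ} (hC : ∀ i ∈ s, |m i - c i| ≤ C)
    (hmin : ∑ i ∈ s, ∑ t ∈ u, (m i + e i t - c i) ^ 2
      ≤ ∑ i ∈ s, ∑ t ∈ u, (m i + e i t - m i) ^ 2) :
    #u * ∑ i ∈ s, (m i - c i) ^ 2 ≤ 2 * C * ∑ i ∈ s, |∑ t ∈ u, e i t| := by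
  have hexpand : ∀ i, ∑ t ∈ u, (m i + e i t - c i) ^ 2 = #u * (m i - c i) ^ 2
      + 2 * ((m i - c i) * ∑ t ∈ u, e i t) + ∑ t ∈ u, (m i + e i t - m i) ^ 2 := fun i => by
    simp only [add_sub_cancel_left, mul_sum, ← sum_add_distrib, card_eq_sum_ones, Nat.cast_sum,
      Nat.cast_one, sum_mul]
    exact sum_congr rfl fun t _ => by ring
  have hcross : ∀ i ∈ s, -((m i - c i) * ∑ t ∈ u, e i t) ≤ C * |∑ t ∈ u, e i t| := fun i hi =>
    calc _ ≤ |m i - c i| * |∑ t ∈ u, e i t| := abs_mul (m i - c i) _ ▸ neg_le_abs _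
      _ ≤ _ := mul_le_mul_of_nonneg_right (hC i hi) (abs_nonneg _)
  simp only [hexpand, sum_add_distrib, ← mul_sum] at hmin
  have := sum_le_sum hcross
  rw [sum_neg_distrib, ← mul_sum] at this
  linarith

lemma inv_card_mul_sum_sq_sub_le {κ ι : Type*} (s : Finset κ) (u : Finset ι) {m c : κ → ℝ}
    (e : κ → ι → ℝ) {C : ℝ} (hu : u.Nonempty) (hC : ∀ i ∈ s, |m i - c i| ≤ C)
    (hmin : ∑ i ∈ s, ∑ t ∈ u, (m i + e i t - c i) ^ 2
      ≤ ∑ i ∈ s, ∑ t ∈ u, (m i + e i t - m i) ^ 2) :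
    (#s : ℝ)⁻¹ * ∑ i ∈ s, (m i - c i) ^ 2 ≤ 2 * C * meanAbsRowMean s u e := by
  have hu₀ : (0 : ℝ) < #u := by simpa using hu.card_pos
  calc (#s : ℝ)⁻¹ * ∑ i ∈ s, (m i - c i) ^ 2
      = ((#s : ℝ) * #u)⁻¹ * (#u * ∑ i ∈ s, (m i - c i) ^ 2) := by field_simp
    _ ≤ ((#s : ℝ) * #u)⁻¹ * (2 * C * ∑ i ∈ s, |∑ t ∈ u, e i t|) :=
      mul_le_mul_of_nonneg_left (card_mul_sum_sq_sub_le s u e hC hmin) (by positivity)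
    _ = _ := by rw [meanAbsRowMean]; ring

lemma exists_abs_sub_lt_of_sum_sq_lt {ι κ : Type*} [DecidableEq ι] (a b : ι → ℝ)
    (s : Finset κ) (g₀ ĝ : κ → ι) {q ε : ℝ} (hε : 0 ≤ ε)
    (hgroup : ∀ g, q * #s ≤ #{i ∈ s | g₀ i = g})
    (hfit : ∑ i ∈ s, (b (g₀ i) - a (ĝ i)) ^ 2 < #s * (q * ε ^ 2)) (g : ι) :
    ∃ h, |a h - b g| < ε := by
  have hlt : ∑ i ∈ s with g₀ i = g, (b (g₀ i) - a (ĝ i)) ^ 2 < ∑ i ∈ s with g₀ i = g, ε ^ 2 :=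
    calc _ ≤ ∑ i ∈ s, (b (g₀ i) - a (ĝ i)) ^ 2 :=
          sum_le_sum_of_subset_of_nonneg (filter_subset _ _) fun _ _ _ => sq_nonneg _
      _ < #s * (q * ε ^ 2) := hfit
      _ ≤ _ := by
        rw [sum_const, nsmul_eq_mul, ← mul_assoc, mul_comm (#s : ℝ)]
        gcongr
        exact hgroup g
  obtain ⟨i, hi, hlt⟩ := exists_lt_of_sum_lt hlt
  rw [(mem_filter.1 hi).2] at hlt
  exact ⟨ĝ i, abs_sub_comm (b g) _ ▸ abs_lt_of_sq_lt_sq hlt hε⟩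

lemma exists_perm_abs_sub_lt {ι : Type*} [Finite ι] {a b : ι → ℝ} {ε : ℝ}
    (hsep : ∀ g h, g ≠ h → 2 * ε < |b g - b h|) (hclose : ∀ g, ∃ h, |a h - b g| < ε) :
    ∃ π : Equiv.Perm ι, ∀ g, |a (π g) - b g| < ε := by
  choose f hf using hclose
  have hinj : Function.Injective f := fun g g' hgg' => by
    by_contra hne
    have hg := hf g
    rw [hgg'] at hg
    have := abs_sub_le (b g) (a (f g')) (b g')
    rw [abs_sub_comm (b g) (a (f g'))] at this
    linarith [hsep g g' hne, hf g']
  exact ⟨Equiv.ofBijective f (Finite.injective_iff_bijective.1 hinj), hf⟩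

noncomputable def bestMatching {ι : Type*} [Finite ι] (a b : ι → ℝ) : Equiv.Perm ι :=
  Classical.choose (Finite.exists_min fun π : Equiv.Perm ι => ⨆ g, |a (π g) - b g|)

lemma iSup_abs_bestMatching_sub_le {ι : Type*} [Finite ι] (a b : ι → ℝ) (π : Equiv.Perm ι) :
    ⨆ g, |a (bestMatching a b g) - b g| ≤ ⨆ g, |a (π g) - b g| :=
  Classical.choose_spec (Finite.exists_min fun π : Equiv.Perm ι => ⨆ g, |a (π g) - b g|) π

lemma iSup_abs_bestMatching_sub_le_of_forall_exists {ι : Type*} [Finite ι] {a b : ι → ℝ}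
    {ε : ℝ} (hε : 0 ≤ ε) (hsep : ∀ g h, g ≠ h → 2 * ε < |b g - b h|)
    (hclose : ∀ g, ∃ h, |a h - b g| < ε) :
    ⨆ g, |a (bestMatching a b g) - b g| ≤ ε := by
  obtain ⟨π, hπ⟩ := exists_perm_abs_sub_lt hsep hclose
  exact (iSup_abs_bestMatching_sub_le a b π).trans (Real.iSup_le (fun g => (hπ g).le) hε)

lemma iSup_abs_bestMatching_sub_le_of_meanAbsRowMean_lt {ι κ τ : Type*} [Finite ι]
    [DecidableEq ι] {a b : ι → ℝ} {s : Finset κ} {u : Finset τ} {g₀ ĝ : κ → ι}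
    {e : κ → τ → ℝ} {C q ε : ℝ} (hs : s.Nonempty) (hu : u.Nonempty) (hε : 0 ≤ ε)
    (hsep : ∀ g h, g ≠ h → 2 * ε < |b g - b h|) (hgroup : ∀ g, q * #s ≤ #{i ∈ s | g₀ i = g})
    (hC : ∀ i ∈ s, |b (g₀ i) - a (ĝ i)| ≤ C)
    (hmin : ∑ i ∈ s, ∑ t ∈ u, (b (g₀ i) + e i t - a (ĝ i)) ^ 2
      ≤ ∑ i ∈ s, ∑ t ∈ u, (b (g₀ i) + e i t - b (g₀ i)) ^ 2)
    (hnoise : 2 * C * meanAbsRowMean s u e < q * ε ^ 2) :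
    ⨆ g, |a (bestMatching a b g) - b g| ≤ ε := by
  have hfit := (inv_mul_lt_iff₀ (by simpa using hs.card_pos)).1 <|
    (inv_card_mul_sum_sq_sub_le s u e hu hC hmin).trans_lt hnoise
  exact iSup_abs_bestMatching_sub_le_of_forall_exists hε hsep
    (exists_abs_sub_lt_of_sum_sq_lt a b s g₀ ĝ hε hgroup hfit)

theorem mean_consistency_general
    {G : ℕ}
    (Ω : ℕ → Type) (mΩ : ∀ n, MeasurableSpace (Ω n))
    (P : ∀ n, Measure (Ω n)) (hP : ∀ n, IsProbabilityMeasure (P n))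
    (N T : ℕ → ℕ)
    (hN : Tendsto (fun n => (N n : ℝ)) atTop atTop)
    (hT : Tendsto (fun n => (T n : ℝ)) atTop atTop)
    -- data generating process
    (v : ∀ n, ℕ → ℕ → Ω n → ℝ) (hvmeas : ∀ n i t, Measurable (v n i t))
    (σ : ℕ → ℕ → ℝ)
    (g0 : ℕ → ℕ → Fin G) (μ0 : Fin G → ℝ)
    (y : ∀ n, ℕ → ℕ → Ω n → ℝ)
    (hy : ∀ n i t ω, y n i t ω = μ0 (g0 n i) + σ n i * v n i t ω)
    -- Assumption 1(i): independence over time, mean zero, unit variance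
    (hindep : ∀ n i, iIndepFun (fun t => v n i t) (P n))
    (hmean : ∀ n i t, ∫ ω, v n i t ω ∂(P n) = 0)
    (hvar : ∀ n i t, ∫ ω, (v n i t ω) ^ 2 ∂(P n) = 1)
    -- Assumption 1(ii): average error variance is o(T)
    (hA1ii : Tendsto
      (fun n => ((N n : ℝ)⁻¹ * ∑ i ∈ Finset.range (N n), (σ n i) ^ 2) / (T n : ℝ))
      atTop (nhds 0))
    -- Assumption 1(iii): bounded parameter set containing the truth
    (M : Set (Fin G → ℝ)) (hMbdd : Bornology.IsBounded M) (hμ0M : μ0 ∈ M)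
    -- Assumption 1(iv): group separation
    (MG : ℝ) (hMG : 0 < MG)
    (hsep : ∀ g h : Fin G, g ≠ h → MG < |μ0 g - μ0 h|)
    -- Assumption 1(v): non-negligible groups
    (qmin : ℝ) (hqmin : 0 < qmin)
    (hgroup : ∀ n (g : Fin G),
      qmin * (N n : ℝ) ≤ ((Finset.range (N n)).filter (fun i => g0 n i = g)).card)
    -- the kmeans estimator: joint minimizer of the objective
    (μhat : ∀ n, Ω n → Fin G → ℝ) (ghat : ∀ n, Ω n → ℕ → Fin G)
    (hμhatM : ∀ n ω, μhat n ω ∈ M)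
    (hmin : ∀ n ω (g : ℕ → Fin G) (μ : Fin G → ℝ), μ ∈ M →
      ((N n : ℝ) * (T n : ℝ))⁻¹ * ∑ i ∈ Finset.range (N n), ∑ t ∈ Finset.range (T n),
          (y n i t ω - μhat n ω (ghat n ω i)) ^ 2
        ≤ ((N n : ℝ) * (T n : ℝ))⁻¹ * ∑ i ∈ Finset.range (N n), ∑ t ∈ Finset.range (T n),
          (y n i t ω - μ (g i)) ^ 2) :
    ∃ π : (n : ℕ) → Ω n → Equiv.Perm (Fin G),
      ∀ ε : ℝ, 0 < ε →
        Tendsto (fun n => P n {ω | ε < ⨆ g : Fin G, |μhat n ω (π n ω g) - μ0 g|})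
          atTop (nhds 0) := by
  obtain ⟨C, hC, hCM⟩ := exists_pos_abs_sub_le_of_isBounded hMbdd
  have hv : ∀ n i t, MemLp (v n i t) 2 (P n) := fun n i t =>
    (memLp_two_iff_integrable_sq (hvmeas n i t).aestronglyMeasurable).2
      (.of_integral_ne_zero (by simp [hvar]))
  refine ⟨fun n ω => bestMatching (μhat n ω) μ0, fun ε hε => ?_⟩
  set ε' := min ε (MG / 2)
  have hε' : 0 < ε' := lt_min hε (half_pos hMG)
  set Z : ∀ n, Ω n → ℝ := fun n ω =>
    meanAbsRowMean (range (N n)) (range (T n)) fun i t => σ n i * v n i t ω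
  have hZ : Tendsto (fun n => P n {ω | qmin * ε' ^ 2 / (2 * C) ≤ Z n ω}) atTop (nhds 0) := by
    refine tendsto_measure_setOf_le_of_integral_le (fun n ω => meanAbsRowMean_nonneg _ _ _)
      (fun n => integrable_meanAbsRowMean _ _ fun i t =>
        ((hv n i t).integrable one_le_two).const_mul _)
      (fun n => ?_) (by simpa only [Real.sqrt_zero] using hA1ii.sqrt) (by positivity)
    simpa only [card_range] using integral_meanAbsRowMean_le (range (N n)) (range (T n)) (σ n)
      (hv n) (hindep n) (hmean n) (hvar n)
  refine tendsto_of_tendsto_of_tendsto_of_le_of_le' tendsto_const_nhds hZ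
    (.of_forall fun _ => zero_le) ?_
  filter_upwards [hN.eventually_gt_atTop 0, hT.eventually_gt_atTop 0] with n hN0 hT0
  refine measure_mono (Set.ofPred_subset_ofPred.2 fun ω hω => ?_)
  by_contra! hsmall
  have hobj := le_of_mul_le_mul_left (hmin n ω (g0 n) μ0 hμ0M) (inv_pos.2 (mul_pos hN0 hT0))
  simp only [hy] at hobj
  refine not_lt.2 (le_trans ?_ (min_le_left ε (MG / 2))) hω
  exact iSup_abs_bestMatching_sub_le_of_meanAbsRowMean_lt
    (nonempty_range_iff.2 (Nat.cast_pos.1 hN0).ne') (nonempty_range_iff.2 (Nat.cast_pos.1 hT0).ne')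
    hε'.le (fun g h hgh => by linarith [hsep g h hgh, min_le_right ε (MG / 2)])
    (by simpa using hgroup n) (fun i _ => hCM _ hμ0M _ (hμhatM n ω) _ _) hobj
    ((lt_div_iff₀' (by positivity)).1 hsmall)

/-- **Lemma 1 (Consistency of group-specific means).**
Panel model with latent group structure: for each `n` there are `N n` units and `T n`
periods, outcomes `y n i t = μ0 (g0 n i) + σ n i * v n i t`.  Under Assumption 1 and the
asymptotic sequence `N, T → ∞`, `(log T)·√(log N)/√T → 0`, there exists a (possibly
random) permutation `π` of the `G` groups such that for every `ε > 0`,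
`P (max_g |μ̂_{π g} − μ0 g| > ε) → 0`. -/
theorem mean_consistency
    {G : ℕ} (hG : 0 < G)
    (Ω : ℕ → Type) (mΩ : ∀ n, MeasurableSpace (Ω n))
    (P : ∀ n, Measure (Ω n)) (hP : ∀ n, IsProbabilityMeasure (P n))
    (N T : ℕ → ℕ)
    (hN : Tendsto (fun n => (N n : ℝ)) atTop atTop)
    (hT : Tendsto (fun n => (T n : ℝ)) atTop atTop)
    (hrate : Tendsto
      (fun n => Real.log (T n) * Real.sqrt (Real.log (N n)) / Real.sqrt (T n))
      atTop (nhds 0))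
    -- data generating process
    (v : ∀ n, ℕ → ℕ → Ω n → ℝ) (hvmeas : ∀ n i t, Measurable (v n i t))
    (σ : ℕ → ℕ → ℝ) (hσ : ∀ n i, 0 ≤ σ n i)
    (g0 : ℕ → ℕ → Fin G) (μ0 : Fin G → ℝ)
    (y : ∀ n, ℕ → ℕ → Ω n → ℝ)
    (hy : ∀ n i t ω, y n i t ω = μ0 (g0 n i) + σ n i * v n i t ω)
    -- Assumption 1(i): independence over time, mean zero, unit variance
    (hindep : ∀ n i, iIndepFun (fun t => v n i t) (P n))
    (hmean : ∀ n i t, ∫ ω, v n i t ω ∂(P n) = 0)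
    (hvar : ∀ n i t, ∫ ω, (v n i t ω) ^ 2 ∂(P n) = 1)
    -- Assumption 1(ii): average error variance is o(T)
    (hA1ii : Tendsto
      (fun n => ((N n : ℝ)⁻¹ * ∑ i ∈ Finset.range (N n), (σ n i) ^ 2) / (T n : ℝ))
      atTop (nhds 0))
    -- Assumption 1(iii): bounded parameter set containing the truth
    (M : Set (Fin G → ℝ)) (hMbdd : Bornology.IsBounded M) (hμ0M : μ0 ∈ M)
    -- Assumption 1(iv): group separation
    (MG : ℝ) (hMG : 0 < MG)
    (hsep : ∀ g h : Fin G, g ≠ h → MG < |μ0 g - μ0 h|)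
    -- Assumption 1(v): non-negligible groups
    (qmin : ℝ) (hqmin : 0 < qmin)
    (hgroup : ∀ n (g : Fin G),
      qmin * (N n : ℝ) ≤ ((Finset.range (N n)).filter (fun i => g0 n i = g)).card)
    -- the kmeans estimator: joint minimizer of the objective
    (μhat : ∀ n, Ω n → Fin G → ℝ) (ghat : ∀ n, Ω n → ℕ → Fin G)
    (hμhatM : ∀ n ω, μhat n ω ∈ M)
    (hmin : ∀ n ω (g : ℕ → Fin G) (μ : Fin G → ℝ), μ ∈ M →
      ((N n : ℝ) * (T n : ℝ))⁻¹ * ∑ i ∈ Finset.range (N n), ∑ t ∈ Finset.range (T n),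
          (y n i t ω - μhat n ω (ghat n ω i)) ^ 2
        ≤ ((N n : ℝ) * (T n : ℝ))⁻¹ * ∑ i ∈ Finset.range (N n), ∑ t ∈ Finset.range (T n),
          (y n i t ω - μ (g i)) ^ 2) :
    ∃ π : (n : ℕ) → Ω n → Equiv.Perm (Fin G),
      ∀ ε : ℝ, 0 < ε →
        Tendsto (fun n => P n {ω | ε < ⨆ g : Fin G, |μhat n ω (π n ω g) - μ0 g|})
          atTop (nhds 0) :=
  mean_consistency_general Ω mΩ P hP N T hN hT v hvmeas σ g0 μ0 y hy hindep hmean hvar hA1ii M hMbdd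
    hμ0M MG hMG hsep qmin hqmin hgroup μhat ghat hμhatM hmin
end

section
/- Mean-squared consistency of fitted means (Lemma A.3): Under parts (i)–(iii) of Assumption 1, for every ε > 0, P( N_n^{-1} Σ_{i=1}^{N_n} (μ⁰_{g⁰_i} − μ̂_{ĝ_i})² > ε ) → 0 as n → ∞. -/
/-!
Comparing the objective at the estimator with its value at the truth `(g⁰, μ⁰) ∈ M` gives
`∑ᵢ (T Dᵢ² + 2 Dᵢ Sᵢ) ≤ 0` with `Dᵢ = μ⁰_{g⁰ᵢ} − μ̂_{ĝᵢ}` and `Sᵢ = σᵢ ∑ₜ vᵢₜ`; completing the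
square bounds `N⁻¹ ∑ᵢ Dᵢ²` by `4 N⁻¹ ∑ᵢ (Sᵢ / T)²`. By independence over `t` the latter has
expectation `N⁻¹ ∑ᵢ σᵢ² / T = o(1)`, and Markov's inequality concludes.
-/

open MeasureTheory ProbabilityTheory Filter Finset

lemma sum_sq_const_add {κ : Type*} (s : Finset κ) (a : ℝ) (e : κ → ℝ) :
    ∑ t ∈ s, (a + e t) ^ 2 = #s * a ^ 2 + 2 * a * ∑ t ∈ s, e t + ∑ t ∈ s, e t ^ 2 := by
  simp only [add_sq, sum_add_distrib, sum_const, nsmul_eq_mul, mul_sum]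

lemma sum_sq_le_four_mul_sum_sq_mean_of_sum_sq_add_le {ι κ : Type*} (I : Finset ι)
    {s : Finset κ} (hs : s.Nonempty) (D : ι → ℝ) (e : ι → κ → ℝ)
    (h : ∑ i ∈ I, ∑ t ∈ s, (D i + e i t) ^ 2 ≤ ∑ i ∈ I, ∑ t ∈ s, e i t ^ 2) :
    ∑ i ∈ I, D i ^ 2 ≤ 4 * ∑ i ∈ I, ((∑ t ∈ s, e i t) / #s) ^ 2 := by
  have hc : (0 : ℝ) < #s := by exact_mod_cast hs.card_pos
  have hcross : ∑ i ∈ I, (#s * D i ^ 2 + 2 * D i * ∑ t ∈ s, e i t) ≤ 0 := by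
    simpa [sum_sq_const_add, sum_add_distrib] using h
  have hterm : ∀ i ∈ I, #s / 2 * (D i ^ 2 - 4 * ((∑ t ∈ s, e i t) / #s) ^ 2)
      ≤ #s * D i ^ 2 + 2 * D i * ∑ t ∈ s, e i t := by
    intro i _
    have hsq : #s * D i ^ 2 + 2 * D i * ∑ t ∈ s, e i t
          - #s / 2 * (D i ^ 2 - 4 * ((∑ t ∈ s, e i t) / #s) ^ 2)
        = #s / 2 * (D i + 2 * ((∑ t ∈ s, e i t) / #s)) ^ 2 := by
      field_simp
      ring
    rw [← sub_nonneg, hsq]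
    positivity
  have hhalf := (sum_le_sum hterm).trans hcross
  rw [← mul_sum, sum_sub_distrib, ← mul_sum] at hhalf
  linarith [nonpos_of_mul_nonpos_right hhalf (half_pos hc)]

lemma memLp_two_of_integral_sq_ne_zero {Ω : Type*} [MeasurableSpace Ω] {P : Measure Ω}
    {f : Ω → ℝ} (hf : AEStronglyMeasurable f P) (h : ∫ ω, f ω ^ 2 ∂P ≠ 0) : MemLp f 2 P :=
  (memLp_two_iff_integrable_sq hf).2 (Integrable.of_integral_ne_zero h)

lemma integral_sq_sum_eq_sum_integral_sq {Ω κ : Type*} [MeasurableSpace Ω] {P : Measure Ω}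
    [IsFiniteMeasure P] {s : Finset κ} {f : κ → Ω → ℝ} (hL2 : ∀ t ∈ s, MemLp (f t) 2 P)
    (hindep : Set.Pairwise s fun t u => f t ⟂ᵢ[P] f u) (hmean : ∀ t ∈ s, ∫ ω, f t ω ∂P = 0) :
    ∫ ω, (∑ t ∈ s, f t ω) ^ 2 ∂P = ∑ t ∈ s, ∫ ω, f t ω ^ 2 ∂P := by
  have hsum : MemLp (∑ t ∈ s, f t) 2 P := memLp_finsetSum' s hL2
  have hsum_mean : ∫ ω, (∑ t ∈ s, f t) ω ∂P = 0 := by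
    simp only [Finset.sum_apply]
    rw [integral_finsetSum s fun t ht => (hL2 t ht).integrable one_le_two]
    exact sum_eq_zero hmean
  calc ∫ ω, (∑ t ∈ s, f t ω) ^ 2 ∂P = Var[∑ t ∈ s, f t; P] := by
        simp [variance_of_integral_eq_zero hsum.aemeasurable hsum_mean, Finset.sum_apply]
    _ = ∑ t ∈ s, Var[f t; P] := IndepFun.variance_sum hL2 hindep
    _ = ∑ t ∈ s, ∫ ω, f t ω ^ 2 ∂P :=
        sum_congr rfl fun t ht => variance_of_integral_eq_zero (hL2 t ht).aemeasurable (hmean t ht)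

lemma sq_sum_const_mul_div {κ : Type*} (s : Finset κ) (c d : ℝ) (x : κ → ℝ) :
    ((∑ t ∈ s, c * x t) / d) ^ 2 = (c / d) ^ 2 * (∑ t ∈ s, x t) ^ 2 := by
  rw [← mul_sum]; ring

section NoiseEnergy

variable {Ω ι κ : Type*} [MeasurableSpace Ω] {P : Measure Ω} {v : ι → κ → Ω → ℝ}

lemma integrable_sum_sq_mean (hL2 : ∀ i t, MemLp (v i t) 2 P) (I : Finset ι) (s : Finset κ)
    (σ : ι → ℝ) :
    Integrable (fun ω => ∑ i ∈ I, ((∑ t ∈ s, σ i * v i t ω) / #s) ^ 2) P := by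
  simp only [sq_sum_const_mul_div]
  exact integrable_finsetSum I fun i _ =>
    ((memLp_finsetSum s fun t _ => hL2 i t).integrable_sq).const_mul _

lemma integral_sum_sq_mean [IsFiniteMeasure P] (hL2 : ∀ i t, MemLp (v i t) 2 P)
    (hindep : ∀ i, iIndepFun (v i) P) (hmean : ∀ i t, ∫ ω, v i t ω ∂P = 0)
    (hvar : ∀ i t, ∫ ω, v i t ω ^ 2 ∂P = 1) (I : Finset ι) (s : Finset κ) (σ : ι → ℝ) :
    ∫ ω, ∑ i ∈ I, ((∑ t ∈ s, σ i * v i t ω) / #s) ^ 2 ∂P = (∑ i ∈ I, σ i ^ 2) / #s := by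
  have hunit : ∀ i, ∫ ω, (∑ t ∈ s, v i t ω) ^ 2 ∂P = #s := fun i => by
    rw [integral_sq_sum_eq_sum_integral_sq (fun t _ => hL2 i t)
      (fun t _ u _ htu => (hindep i).indepFun htu) (fun t _ => hmean i t)]
    simp [hvar]
  simp only [sq_sum_const_mul_div]
  rw [integral_finsetSum I fun i _ =>
    ((memLp_finsetSum s fun t _ => hL2 i t).integrable_sq).const_mul _, sum_div]
  refine sum_congr rfl fun i _ => ?_
  rw [integral_const_mul, hunit]
  rcases eq_or_ne (#s : ℝ) 0 with hs | hs
  · simp [hs]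
  · field_simp

end NoiseEnergy

lemma tendsto_measure_lt_of_le_of_integral_tendsto_zero {α : Type*} {l : Filter α}
    {Ω : α → Type*} [∀ n, MeasurableSpace (Ω n)] {P : ∀ n, Measure (Ω n)}
    [∀ n, IsFiniteMeasure (P n)] {Z W : ∀ n, Ω n → ℝ} (hZW : ∀ᶠ n in l, ∀ ω, Z n ω ≤ W n ω)
    (hW : ∀ n ω, 0 ≤ W n ω) (hWint : ∀ n, Integrable (W n) (P n))
    (hlim : Tendsto (fun n => ∫ ω, W n ω ∂P n) l (nhds 0)) {ε : ℝ} (hε : 0 < ε) :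
    Tendsto (fun n => P n {ω | ε < Z n ω}) l (nhds 0) := by
  have hmarkov : ∀ n, P n {ω | ε ≤ W n ω} ≤ ENNReal.ofReal ((∫ ω, W n ω ∂P n) / ε) :=
      fun n => by
    rw [← ofReal_measureReal]
    exact ENNReal.ofReal_le_ofReal ((le_div_iff₀' hε).2
      (mul_meas_ge_le_integral_of_nonneg (ae_of_all _ (hW n)) (hWint n) ε))
  have hbound : ∀ᶠ n in l, P n {ω | ε < Z n ω} ≤ ENNReal.ofReal ((∫ ω, W n ω ∂P n) / ε) :=
    hZW.mono fun n h => (measure_mono fun ω hω => hω.le.trans (h ω)).trans (hmarkov n)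
  have hlim' : Tendsto (fun n => ENNReal.ofReal ((∫ ω, W n ω ∂P n) / ε)) l (nhds 0) := by
    simpa using ENNReal.tendsto_ofReal (hlim.div_const ε)
  exact tendsto_of_tendsto_of_tendsto_of_le_of_le' tendsto_const_nhds hlim'
    (Eventually.of_forall fun n => zero_le) hbound

theorem fitted_means_mean_squared_consistency_general
    {G : ℕ}
    (Ω : ℕ → Type) (mΩ : ∀ n, MeasurableSpace (Ω n))
    (P : ∀ n, Measure (Ω n)) (hP : ∀ n, IsProbabilityMeasure (P n))
    (N T : ℕ → ℕ)
    (hT : Tendsto (fun n => (T n : ℝ)) atTop atTop)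
    -- data generating process
    (v : ∀ n, ℕ → ℕ → Ω n → ℝ) (hvmeas : ∀ n i t, Measurable (v n i t))
    (σ : ℕ → ℕ → ℝ)
    (g0 : ℕ → ℕ → Fin G) (μ0 : Fin G → ℝ)
    (y : ∀ n, ℕ → ℕ → Ω n → ℝ)
    (hy : ∀ n i t ω, y n i t ω = μ0 (g0 n i) + σ n i * v n i t ω)
    -- Assumption 1(i): independence over time, mean zero, unit variance
    (hindep : ∀ n i, iIndepFun (fun t => v n i t) (P n))
    (hmean : ∀ n i t, ∫ ω, v n i t ω ∂(P n) = 0)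
    (hvar : ∀ n i t, ∫ ω, (v n i t ω) ^ 2 ∂(P n) = 1)
    -- Assumption 1(ii): average error variance is o(T)
    (hA1ii : Tendsto
      (fun n => ((N n : ℝ)⁻¹ * ∑ i ∈ Finset.range (N n), (σ n i) ^ 2) / (T n : ℝ))
      atTop (nhds 0))
    -- Assumption 1(iii): bounded parameter set containing the truth
    (M : Set (Fin G → ℝ)) (hμ0M : μ0 ∈ M)
    -- the kmeans estimator: joint minimizer of the objective
    (μhat : ∀ n, Ω n → Fin G → ℝ) (ghat : ∀ n, Ω n → ℕ → Fin G)
    (hmin : ∀ n ω (g : ℕ → Fin G) (μ : Fin G → ℝ), μ ∈ M →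
      ((N n : ℝ) * (T n : ℝ))⁻¹ * ∑ i ∈ Finset.range (N n), ∑ t ∈ Finset.range (T n),
          (y n i t ω - μhat n ω (ghat n ω i)) ^ 2
        ≤ ((N n : ℝ) * (T n : ℝ))⁻¹ * ∑ i ∈ Finset.range (N n), ∑ t ∈ Finset.range (T n),
          (y n i t ω - μ (g i)) ^ 2)
    (ε : ℝ) (hε : 0 < ε) :
    Tendsto (fun n => P n {ω |
        ε < (N n : ℝ)⁻¹ * ∑ i ∈ Finset.range (N n),
              (μ0 (g0 n i) - μhat n ω (ghat n ω i)) ^ 2})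
      atTop (nhds 0) := by
  have hL2 : ∀ n i t, MemLp (v n i t) 2 (P n) := fun n i t =>
    memLp_two_of_integral_sq_ne_zero (hvmeas n i t).aestronglyMeasurable (by simp [hvar])
  have hbasic : ∀ n, 0 < T n → ∀ ω,
      ∑ i ∈ range (N n), (μ0 (g0 n i) - μhat n ω (ghat n ω i)) ^ 2
        ≤ 4 * ∑ i ∈ range (N n), ((∑ t ∈ range (T n), σ n i * v n i t ω) / T n) ^ 2 := by
    intro n hTn ω
    rcases (N n).eq_zero_or_pos with hN0 | hNn
    · simp [hN0]
    have h := le_of_mul_le_mul_left (hmin n ω (g0 n) μ0 hμ0M) (by positivity)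
    simp only [hy, add_sub_right_comm, sub_self, zero_add] at h
    simpa using
      sum_sq_le_four_mul_sum_sq_mean_of_sum_sq_add_le _ (nonempty_range_iff.2 hTn.ne') _ _ h
  have hexp : ∀ n,
      ∫ ω, ∑ i ∈ range (N n), ((∑ t ∈ range (T n), σ n i * v n i t ω) / T n) ^ 2 ∂P n
        = (∑ i ∈ range (N n), σ n i ^ 2) / T n := fun n => by
    simpa using integral_sum_sq_mean (hL2 n) (hindep n) (hmean n) (hvar n) _ (range (T n)) (σ n)
  refine tendsto_measure_lt_of_le_of_integral_tendsto_zero (W := fun n ω =>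
      4 * ((N n : ℝ)⁻¹ * ∑ i ∈ range (N n), ((∑ t ∈ range (T n), σ n i * v n i t ω) / T n) ^ 2))
    ?_ (fun n ω => by positivity) (fun n => ?_) ?_ hε
  · filter_upwards [hT.eventually_gt_atTop 0] with n hTn ω
    have := mul_le_mul_of_nonneg_left (hbasic n (by exact_mod_cast hTn) ω)
      (inv_nonneg.2 (Nat.cast_nonneg (α := ℝ) (N n)))
    linarith
  · simpa using ((integrable_sum_sq_mean (hL2 n) _ (range (T n)) (σ n)).const_mul _).const_mul 4
  · simpa [integral_const_mul, hexp, mul_div_assoc] using hA1ii.const_mul 4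

/-- **Lemma A.3 (Mean-squared consistency of fitted means).**
Under parts (i)–(iii) of Assumption 1, for every `ε > 0`,
`P ( N^{-1} Σ_i (μ⁰_{g⁰_i} − μ̂_{ĝ_i})² > ε ) → 0`. -/
theorem fitted_means_mean_squared_consistency
    {G : ℕ} (hG : 0 < G)
    (Ω : ℕ → Type) (mΩ : ∀ n, MeasurableSpace (Ω n))
    (P : ∀ n, Measure (Ω n)) (hP : ∀ n, IsProbabilityMeasure (P n))
    (N T : ℕ → ℕ)
    (hN : Tendsto (fun n => (N n : ℝ)) atTop atTop)
    (hT : Tendsto (fun n => (T n : ℝ)) atTop atTop)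
    (hrate : Tendsto
      (fun n => Real.log (T n) * Real.sqrt (Real.log (N n)) / Real.sqrt (T n))
      atTop (nhds 0))
    -- data generating process
    (v : ∀ n, ℕ → ℕ → Ω n → ℝ) (hvmeas : ∀ n i t, Measurable (v n i t))
    (σ : ℕ → ℕ → ℝ) (hσ : ∀ n i, 0 ≤ σ n i)
    (g0 : ℕ → ℕ → Fin G) (μ0 : Fin G → ℝ)
    (y : ∀ n, ℕ → ℕ → Ω n → ℝ)
    (hy : ∀ n i t ω, y n i t ω = μ0 (g0 n i) + σ n i * v n i t ω)
    -- Assumption 1(i): independence over time, mean zero, unit variance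
    (hindep : ∀ n i, iIndepFun (fun t => v n i t) (P n))
    (hmean : ∀ n i t, ∫ ω, v n i t ω ∂(P n) = 0)
    (hvar : ∀ n i t, ∫ ω, (v n i t ω) ^ 2 ∂(P n) = 1)
    -- Assumption 1(ii): average error variance is o(T)
    (hA1ii : Tendsto
      (fun n => ((N n : ℝ)⁻¹ * ∑ i ∈ Finset.range (N n), (σ n i) ^ 2) / (T n : ℝ))
      atTop (nhds 0))
    -- Assumption 1(iii): bounded parameter set containing the truth
    (M : Set (Fin G → ℝ)) (hMbdd : Bornology.IsBounded M) (hμ0M : μ0 ∈ M)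
    -- the kmeans estimator: joint minimizer of the objective
    (μhat : ∀ n, Ω n → Fin G → ℝ) (ghat : ∀ n, Ω n → ℕ → Fin G)
    (hμhatM : ∀ n ω, μhat n ω ∈ M)
    (hmin : ∀ n ω (g : ℕ → Fin G) (μ : Fin G → ℝ), μ ∈ M →
      ((N n : ℝ) * (T n : ℝ))⁻¹ * ∑ i ∈ Finset.range (N n), ∑ t ∈ Finset.range (T n),
          (y n i t ω - μhat n ω (ghat n ω i)) ^ 2
        ≤ ((N n : ℝ) * (T n : ℝ))⁻¹ * ∑ i ∈ Finset.range (N n), ∑ t ∈ Finset.range (T n),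
          (y n i t ω - μ (g i)) ^ 2)
    (ε : ℝ) (hε : 0 < ε) :
    Tendsto (fun n => P n {ω |
        ε < (N n : ℝ)⁻¹ * ∑ i ∈ Finset.range (N n),
              (μ0 (g0 n i) - μhat n ω (ghat n ω i)) ^ 2})
      atTop (nhds 0) :=
  fitted_means_mean_squared_consistency_general Ω mΩ P hP N T hT v hvmeas σ g0 μ0 y hy hindep hmean
    hvar hA1ii M hμ0M μhat ghat hmin ε hε
end
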